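/- arXiv:0908.3781 — 2 statements merged into one kernel-verified Lean document; each statement's English description precedes it below -/
import Mathlib

section
/- If A is a polynomial in the coefficients a_0, …, a_n that is homogeneous of degree g and isobaric of weight p, then D(Δ(Δ A)) − Δ(Δ(D A)) = (2·((n·g : ℚ) − 2·p − 1)) • (Δ A). -/
open MvPolynomial

/-- The weight function assigning weight `i` to the coefficient variable `aᵢ`. -/
def wt (n : ℕ) : Fin (n + 1) → ℕ := fun i => (i : ℕ)

/-- The lowering operator `D A = Σ_{i=0}^{n-1} (i+1) · aᵢ · ∂A/∂a_{i+1}`. -/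
noncomputable def Dop (n : ℕ) (A : MvPolynomial (Fin (n + 1)) ℚ) :
    MvPolynomial (Fin (n + 1)) ℚ :=
  ∑ i : Fin n, C ((i : ℕ) + 1 : ℚ) * X i.castSucc * pderiv i.succ A

/-- The raising operator `Δ A = Σ_{i=0}^{n-1} (n-i) · a_{i+1} · ∂A/∂aᵢ`. -/
noncomputable def Δop (n : ℕ) (A : MvPolynomial (Fin (n + 1)) ℚ) :
    MvPolynomial (Fin (n + 1)) ℚ :=
  ∑ i : Fin n, C ((n - (i : ℕ) : ℕ) : ℚ) * X i.succ * pderiv i.castSucc A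

/-! `D` and `Δ` are derivations, so their commutator `⁅D, Δ⁆` is a derivation too, determined by
its values on the variables: `⁅D, Δ⁆ aₖ = ((k + 1)(n - k) - k(n - k + 1)) aₖ = (n - 2k) aₖ`. Hence
`⁅D, Δ⁆ = n • E₁ - 2 • E_wt` for the Euler derivations `E_w = Σ w(k) aₖ ∂/∂aₖ`, and Euler's identity
makes it act on `A` as the scalar `n g - 2 p`. Finally `DΔ² - Δ²D = ⁅D, Δ⁆ Δ + Δ ⁅D, Δ⁆`, and `Δ A`
is again homogeneous of degree `g`, now of weight `p + 1`, so the two terms contribute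
`n g - 2 p - 2` and `n g - 2 p`. -/

lemma Derivation.sum_apply {R A M ι : Type*} [CommSemiring R] [CommSemiring A] [Algebra R A]
    [AddCommMonoid M] [Module A M] [Module R M] (s : Finset ι) (D : ι → Derivation R A M)
    (a : A) : (∑ i ∈ s, D i) a = ∑ i ∈ s, D i a := by
  rw [← Derivation.coeFnAddMonoidHom_apply, map_sum, Finset.sum_apply]
  rfl

namespace MvPolynomial

variable {R σ : Type*} [CommSemiring R] {φ : MvPolynomial σ R}

lemma IsWeightedHomogeneous.X_mul_pderiv {M : Type*} [AddCancelCommMonoid M] {w : σ → M}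
    {m m' : M} {i j : σ} (h : φ.IsWeightedHomogeneous w m) (h' : m' + w i = m + w j) :
    (X j * pderiv i φ).IsWeightedHomogeneous w m' := by
  classical
  intro d hd
  rw [coeff_X_mul'] at hd
  split_ifs at hd with hj
  · rw [coeff_pderiv] at hd
    have hweight := h (left_ne_zero_of_mul hd)
    rw [map_add, Finsupp.weight_single, one_smul] at hweight
    rw [Finsupp.mem_support_iff] at hj
    apply add_right_cancel (b := w i)
    rw [h', ← hweight, ← Finsupp.weight_sub_single_add hj]
    abel
  · exact absurd rfl hd

variable [Fintype σ]

noncomputable def weightedEuler (w : σ → ℕ) :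
    Derivation R (MvPolynomial σ R) (MvPolynomial σ R) :=
  ∑ i, (w i • X i : MvPolynomial σ R) • pderiv i

lemma weightedEuler_X (w : σ → ℕ) (k : σ) :
    weightedEuler w (X k : MvPolynomial σ R) = w k • X k := by
  classical
  simp [weightedEuler, Derivation.sum_apply, Pi.single_apply]

lemma IsWeightedHomogeneous.weightedEuler_apply {w : σ → ℕ} {m : ℕ}
    (h : φ.IsWeightedHomogeneous w m) : weightedEuler w φ = m • φ := by
  simpa [weightedEuler, Derivation.sum_apply, mul_assoc] using h.sum_weight_X_mul_pderiv

end MvPolynomial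

namespace BinaryForm

variable (n : ℕ)

noncomputable def lowering :
    Derivation ℚ (MvPolynomial (Fin (n + 1)) ℚ) (MvPolynomial (Fin (n + 1)) ℚ) :=
  ∑ i : Fin n, (C ((i : ℕ) + 1 : ℚ) * X i.castSucc) • pderiv i.succ

noncomputable def raising :
    Derivation ℚ (MvPolynomial (Fin (n + 1)) ℚ) (MvPolynomial (Fin (n + 1)) ℚ) :=
  ∑ i : Fin n, (C ((n - (i : ℕ) : ℕ) : ℚ) * X i.succ) • pderiv i.castSucc

lemma Dop_eq_lowering : Dop n = lowering n := by
  funext A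
  simp [Dop, lowering, Derivation.sum_apply]

lemma Δop_eq_raising : Δop n = raising n := by
  funext A
  simp [Δop, raising, Derivation.sum_apply]

lemma lowering_X_zero : lowering n (X 0) = 0 := by
  simp [lowering, Derivation.sum_apply, Fin.succ_ne_zero]

lemma lowering_X_succ (j : Fin n) :
    lowering n (X j.succ) = C ((j : ℕ) + 1 : ℚ) * X j.castSucc := by
  simp [lowering, Derivation.sum_apply, Pi.single_apply]

lemma raising_X_last : raising n (X (Fin.last n)) = 0 := by
  simp [raising, Derivation.sum_apply, Fin.castSucc_ne_last]

lemma raising_X_castSucc (j : Fin n) :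
    raising n (X j.castSucc) = C ((n : ℚ) - j) * X j.succ := by
  simp [raising, Derivation.sum_apply, Pi.single_apply]

lemma lowering_raising_X (k : Fin (n + 1)) :
    lowering n (raising n (X k)) = C (((k : ℚ) + 1) * (n - k)) * X k := by
  induction k using Fin.lastCases with
  | last => simp [raising_X_last]
  | cast j => simp [raising_X_castSucc, lowering_X_succ, ← mul_assoc, mul_comm]

lemma raising_lowering_X (k : Fin (n + 1)) :
    raising n (lowering n (X k)) = C ((k : ℚ) * (n - k + 1)) * X k := by
  induction k using Fin.cases with
  | zero => simp [lowering_X_zero]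
  | succ j =>
    rw [lowering_X_succ, ← smul_eq_C_mul, Derivation.map_smul, raising_X_castSucc, smul_eq_C_mul,
      ← mul_assoc, ← C_mul, Fin.val_succ]
    push_cast
    ring_nf

lemma lowering_raising_commutator :
    ⁅lowering n, raising n⁆ = n • weightedEuler 1 - 2 • weightedEuler (wt n) := by
  refine derivation_ext fun k => ?_
  rw [Derivation.commutator_apply, lowering_raising_X, raising_lowering_X, Derivation.sub_apply,
    Derivation.smul_apply, Derivation.smul_apply, weightedEuler_X, weightedEuler_X]
  simp only [wt, Pi.one_apply, one_smul, nsmul_eq_mul, map_mul, map_sub, map_add, map_natCast,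
    map_one]
  ring

lemma isWeightedHomogeneous_raising {M : Type*} [AddCancelCommMonoid M]
    {w : Fin (n + 1) → M} {m m' : M} {A : MvPolynomial (Fin (n + 1)) ℚ}
    (hA : A.IsWeightedHomogeneous w m) (h : ∀ i : Fin n, m' + w i.castSucc = m + w i.succ) :
    (raising n A).IsWeightedHomogeneous w m' := by
  rw [← mem_weightedHomogeneousSubmodule ℚ]
  simp only [raising, Derivation.sum_apply, Derivation.smul_apply, smul_eq_mul,
    ← smul_eq_C_mul, smul_mul_assoc]
  exact Submodule.sum_mem _ fun i _ => Submodule.smul_mem _ _ (hA.X_mul_pderiv (h i))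

lemma lowering_raising_commutator_apply {g p : ℕ} {A : MvPolynomial (Fin (n + 1)) ℚ}
    (hg : A.IsHomogeneous g) (hp : A.IsWeightedHomogeneous (wt n) p) :
    ⁅lowering n, raising n⁆ A = (((n * g : ℕ) : ℚ) - 2 * p) • A := by
  rw [lowering_raising_commutator, Derivation.sub_apply, Derivation.smul_apply,
    Derivation.smul_apply, IsWeightedHomogeneous.weightedEuler_apply hg,
    hp.weightedEuler_apply, sub_smul, smul_smul, smul_smul, ← Nat.cast_smul_eq_nsmul ℚ,
    ← Nat.cast_smul_eq_nsmul ℚ (2 * p)]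
  push_cast
  rfl

end BinaryForm

open BinaryForm

/-- If `A` is homogeneous of degree `g` and isobaric of weight `p`, then
`DΔ² A − Δ²D A = 2·(n·g − 2·p − 1) • Δ A`. -/
theorem Dop_Δop_sq_comm (n g p : ℕ) (A : MvPolynomial (Fin (n + 1)) ℚ)
    (hg : A.IsHomogeneous g) (hp : A.IsWeightedHomogeneous (wt n) p) :
    Dop n (Δop n (Δop n A)) - Δop n (Δop n (Dop n A)) =
      (2 * (((n * g : ℕ) : ℚ) - 2 * (p : ℚ) - 1)) • Δop n A := by
  have hΔg : (raising n A).IsHomogeneous g := isWeightedHomogeneous_raising n hg fun _ => rfl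
  have hΔp : (raising n A).IsWeightedHomogeneous (wt n) (p + 1) :=
    isWeightedHomogeneous_raising n hp fun i => by
      simp only [wt, Fin.val_castSucc, Fin.val_succ]; omega
  rw [Dop_eq_lowering, Δop_eq_raising]
  calc lowering n (raising n (raising n A)) - raising n (raising n (lowering n A))
      = ⁅lowering n, raising n⁆ (raising n A) + raising n (⁅lowering n, raising n⁆ A) := by
        simp only [Derivation.commutator_apply, map_sub]
        abel
    _ = (2 * (((n * g : ℕ) : ℚ) - 2 * (p : ℚ) - 1)) • raising n A := by
        rw [lowering_raising_commutator_apply n hΔg hΔp, lowering_raising_commutator_apply n hg hp,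
          Derivation.map_smul, ← add_smul]
        congr 1
        push_cast
        ring
end

section
/- Let A be a polynomial in the coefficients a_0, …, a_n that is homogeneous of degree g and isobaric of weight p, and let k ≥ 1. Then D^[k](Δ A) − Δ(D^[k] A) = (k·((n·g : ℚ) − 2·p + k − 1)) • (D^[k−1] A), where D^[k] denotes the k-fold iterate of D. -/
open MvPolynomial

/-!
The operators `D` and `Δ` are derivations, and so is their commutator `H = [D, Δ]`. Comparing values
on the variables shows `H = Σⱼ (n - 2j) aⱼ ∂/∂aⱼ`, so by Euler's identities `H A = (n g - 2 p) A`,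
and `[H, D] = 2 D`. In the algebra of linear endomorphisms, `[H, D] = 2 D` gives
`H Dⁱ = Dⁱ (H + 2i)`, hence `[Dᵏ, Δ] = Σ_{i<k} Dᵏ⁻¹⁻ⁱ H Dⁱ` acts on `A` as
`Σ_{i<k} (n g - 2 p + 2 i) Dᵏ⁻¹ = k (n g - 2 p + k - 1) Dᵏ⁻¹`.
-/

section Commutator

variable {R : Type*} [Ring R]

theorem mul_pow_eq_of_lie_eq_two_nsmul {h e : R} (he : ⁅h, e⁆ = 2 • e) (k : ℕ) :
    h * e ^ k = e ^ k * h + (2 * k) • e ^ k := by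
  rw [Ring.lie_def, sub_eq_iff_eq_add] at he
  induction k with
  | zero => simp
  | succ k ih =>
    rw [pow_succ, ← mul_assoc, ih, add_mul, mul_assoc, he, smul_mul_assoc]
    simp only [mul_add, ← mul_assoc, mul_smul_comm, ← pow_succ]
    module

theorem pow_succ_mul_sub_mul_pow_succ {e f : R} (he : ⁅⁅e, f⁆, e⁆ = 2 • e) (k : ℕ) :
    e ^ (k + 1) * f - f * e ^ (k + 1) = (k + 1) • (e ^ k * ⁅e, f⁆) + (k * (k + 1)) • e ^ k := by
  induction k with
  | zero => simp [Ring.lie_def]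
  | succ k ih =>
    have hstep : e ^ (k + 2) * f - f * e ^ (k + 2)
        = e * (e ^ (k + 1) * f - f * e ^ (k + 1)) + ⁅e, f⁆ * e ^ (k + 1) := by
      rw [Ring.lie_def, pow_succ' e (k + 1)]
      generalize e ^ (k + 1) = x
      noncomm_ring
    rw [hstep, ih, mul_pow_eq_of_lie_eq_two_nsmul he]
    simp only [mul_add, mul_smul_comm, ← mul_assoc, ← pow_succ']
    module

theorem Module.End.pow_succ_apply_sub_apply_pow_succ {K M : Type*} [CommRing K]
    [AddCommGroup M] [Module K M] {e f : Module.End K M} (he : ⁅⁅e, f⁆, e⁆ = 2 • e) {μ : K}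
    {v : M} (hv : ⁅e, f⁆ v = μ • v) (k : ℕ) :
    (e ^ (k + 1)) (f v) - f ((e ^ (k + 1)) v) = (((k : K) + 1) * (μ + k)) • (e ^ k) v := by
  have := LinearMap.congr_fun (pow_succ_mul_sub_mul_pow_succ he k) v
  simp only [LinearMap.sub_apply, Module.End.mul_apply, LinearMap.add_apply,
    LinearMap.smul_apply, hv, map_smul] at this
  rw [this, ← Nat.cast_smul_eq_nsmul K, ← Nat.cast_smul_eq_nsmul K, smul_smul, ← add_smul]
  congr 1
  push_cast
  ring

end Commutator

theorem Derivation.finset_sum_apply {R A M ι : Type*} [CommSemiring R] [CommSemiring A]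
    [AddCommMonoid M] [Algebra R A] [Module A M] [Module R M] (s : Finset ι)
    (D : ι → Derivation R A M) (a : A) : (∑ i ∈ s, D i) a = ∑ i ∈ s, D i a := by
  induction s using Finset.cons_induction <;> simp [*]

section Derivations

variable {n : ℕ}

noncomputable def Dder (n : ℕ) :
    Derivation ℚ (MvPolynomial (Fin (n + 1)) ℚ) (MvPolynomial (Fin (n + 1)) ℚ) :=
  ∑ i : Fin n, (C ((i : ℕ) + 1 : ℚ) * X i.castSucc) • pderiv i.succ

noncomputable def Δder (n : ℕ) :
    Derivation ℚ (MvPolynomial (Fin (n + 1)) ℚ) (MvPolynomial (Fin (n + 1)) ℚ) :=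
  ∑ i : Fin n, (C ((n - (i : ℕ) : ℕ) : ℚ) * X i.succ) • pderiv i.castSucc

theorem coe_Dder : ⇑(Dder n) = Dop n := by
  ext1 A
  simp [Dder, Dop, Derivation.finset_sum_apply]

theorem coe_Δder : ⇑(Δder n) = Δop n := by
  ext1 A
  simp [Δder, Δop, Derivation.finset_sum_apply]

@[simp] theorem Dder_X_zero : Dder n (X 0) = 0 := by
  simp [Dder, Derivation.finset_sum_apply, Fin.succ_ne_zero]

@[simp] theorem Dder_X_succ (i : Fin n) :
    Dder n (X i.succ) = ((i : ℕ) + 1 : ℚ) • X i.castSucc := by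
  simp [Dder, Derivation.finset_sum_apply, pderiv_X, Pi.single_apply, Algebra.smul_def]

@[simp] theorem Δder_X_last : Δder n (X (Fin.last n)) = 0 := by
  simp [Δder, Derivation.finset_sum_apply, Fin.castSucc_ne_last]

@[simp] theorem Δder_X_castSucc (i : Fin n) :
    Δder n (X i.castSucc) = ((n : ℚ) - (i : ℕ)) • X i.succ := by
  simp [Δder, Derivation.finset_sum_apply, pderiv_X, Pi.single_apply, Algebra.smul_def]

theorem Dder_Δder_X (j : Fin (n + 1)) :
    Dder n (Δder n (X j)) = (((n : ℚ) - j) * (j + 1)) • X j := by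
  induction j using Fin.lastCases with
  | last => simp
  | cast i => simp [smul_smul]

theorem Δder_Dder_X (j : Fin (n + 1)) :
    Δder n (Dder n (X j)) = ((j : ℚ) * (n - j + 1)) • X j := by
  induction j using Fin.cases with
  | zero => simp
  | succ i =>
    rw [Dder_X_succ, Derivation.map_smul, Δder_X_castSucc, smul_smul, Fin.val_succ]
    congr 1
    push_cast
    ring

theorem lie_Dder_Δder_X (j : Fin (n + 1)) :
    ⁅Dder n, Δder n⁆ (X j) = ((n : ℚ) - 2 * j) • X j := by
  rw [Derivation.commutator_apply, Dder_Δder_X, Δder_Dder_X, ← sub_smul]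
  ring_nf

theorem lie_Dder_Δder : ⁅Dder n, Δder n⁆ =
    ∑ j : Fin (n + 1), (((n : ℚ) - 2 * (j : ℕ)) • (X j : MvPolynomial (Fin (n + 1)) ℚ)) •
      pderiv j :=
  derivation_ext fun j => by
    simp [lie_Dder_Δder_X, Derivation.finset_sum_apply, pderiv_X, Pi.single_apply]

theorem lie_lie_Dder_Δder_Dder : ⁅⁅Dder n, Δder n⁆, Dder n⁆ = 2 • Dder n := by
  refine derivation_ext fun j => ?_
  rw [Derivation.commutator_apply, lie_Dder_Δder_X, Derivation.smul_apply]
  induction j using Fin.cases with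
  | zero => simp
  | succ i =>
    rw [Dder_X_succ, Derivation.map_smul, Derivation.map_smul, lie_Dder_Δder_X, Dder_X_succ,
      smul_smul, smul_smul, ← sub_smul, ← Nat.cast_smul_eq_nsmul ℚ, smul_smul]
    congr 1
    simp only [Fin.val_castSucc, Fin.val_succ]
    push_cast
    ring

theorem lie_Dder_Δder_apply {g p : ℕ} {A : MvPolynomial (Fin (n + 1)) ℚ}
    (hg : A.IsHomogeneous g) (hp : A.IsWeightedHomogeneous (wt n) p) :
    ⁅Dder n, Δder n⁆ A = (((n * g : ℕ) : ℚ) - 2 * p) • A := by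
  have euler : ∑ j, X j * pderiv j A = (g : ℚ) • A := by
    rw [hg.sum_X_mul_pderiv, Nat.cast_smul_eq_nsmul]
  have euler_wt : ∑ j, (wt n j : ℚ) • (X j * pderiv j A) = (p : ℚ) • A := by
    simp only [Nat.cast_smul_eq_nsmul, hp.sum_weight_X_mul_pderiv]
  calc ⁅Dder n, Δder n⁆ A
      = ∑ j : Fin (n + 1), ((n : ℚ) - 2 * (j : ℕ)) • (X j * pderiv j A) := by
        simp [lie_Dder_Δder, Derivation.finset_sum_apply]
    _ = (n : ℚ) • ∑ j, X j * pderiv j A - (2 : ℚ) • ∑ j, (wt n j : ℚ) • (X j * pderiv j A) := by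
        simp [sub_smul, Finset.sum_sub_distrib, Finset.smul_sum, smul_smul, wt]
    _ = (((n * g : ℕ) : ℚ) - 2 * p) • A := by
        rw [euler, euler_wt, smul_smul, smul_smul, ← sub_smul, Nat.cast_mul]

end Derivations

/-- If `A` is homogeneous of degree `g` and isobaric of weight `p`, and `k ≥ 1`,
then `Dᵏ(Δ A) − Δ(Dᵏ A) = k·(n·g − 2·p + k − 1) • Dᵏ⁻¹ A`. -/
theorem Dop_iterate_Δop_comm (n g p k : ℕ) (hk : 1 ≤ k)
    (A : MvPolynomial (Fin (n + 1)) ℚ)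
    (hg : A.IsHomogeneous g) (hp : A.IsWeightedHomogeneous (wt n) p) :
    (Dop n)^[k] (Δop n A) - Δop n ((Dop n)^[k] A) =
      ((k : ℚ) * (((n * g : ℕ) : ℚ) - 2 * (p : ℚ) + (k : ℚ) - 1)) •
        (Dop n)^[k - 1] A := by
  obtain ⟨k, rfl⟩ := Nat.exists_eq_add_of_le' hk
  set e : Module.End ℚ (MvPolynomial (Fin (n + 1)) ℚ) := (Dder n).toLinearMap
  set f : Module.End ℚ (MvPolynomial (Fin (n + 1)) ℚ) := (Δder n).toLinearMap
  have he : ⁅⁅e, f⁆, e⁆ = 2 • e := by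
    rw [← Derivation.commutator_coe_linear_map, ← Derivation.commutator_coe_linear_map,
      lie_lie_Dder_Δder_Dder, Derivation.coe_smul_linearMap]
  have hv : ⁅e, f⁆ A = (((n * g : ℕ) : ℚ) - 2 * p) • A := by
    rw [← Derivation.commutator_coe_linear_map, Derivation.coeFn_coe, lie_Dder_Δder_apply hg hp]
  have key := Module.End.pow_succ_apply_sub_apply_pow_succ he hv k
  simp only [Module.End.coe_pow, e, f, Derivation.coeFn_coe, coe_Dder, coe_Δder] at key
  rw [Nat.add_sub_cancel, key]
  congr 1
  push_cast
  ring
end
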